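/- Let d ≥ 1, let 𝒪 ⊆ ℝ^d be a measurable set of finite Lebesgue measure, let q ≥ 2 be a real number, and let f : ℝ → ℝ be continuous, satisfying the one-sided Lipschitz condition with constant L_f ∈ ℝ (i.e., (f(x) − f(y))(x − y) ≤ L_f (x − y)² for all x, y ∈ ℝ) and the polynomial growth bound |f(x)| ≤ C₀(1 + |x|^{q−1}) for all x ∈ ℝ with some C₀ ≥ 0. Then there exists a constant C ≥ 0, depending only on f and on the Lebesgue measure of 𝒪, such that for every u ∈ L^q(𝒪), the function x ↦ f(u(x))·u(x) is Lebesgue integrable on 𝒪 and ∫_𝒪 f(u(x)) u(x) dx ≤ C (1 + ∫_𝒪 u(x)² dx). -/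

import Mathlib

/-!
Testing the one-sided Lipschitz condition at `y = 0` gives the pointwise bound
`f x * x ≤ (max L_f 0 + |f 0|) * (1 + x²)`, which integrates to the claim. Integrability comes
from the growth bound, `|f x * x| ≤ C₀ (|x| + |x|^q)`, and from the finiteness of the measure,
on which `|u|` and `u²` are dominated by `1 + |u|^q` because `1 ≤ 2 ≤ q`.
-/

open MeasureTheory

lemma Real.rpow_le_one_add_rpow {x p q : ℝ} (hx : 0 ≤ x) (hp : 0 ≤ p) (hpq : p ≤ q) :
    x ^ p ≤ 1 + x ^ q := by
  rcases le_total x 1 with h | h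
  · linarith [Real.rpow_le_one hx h hp, Real.rpow_nonneg hx q]
  · linarith [Real.rpow_le_rpow_of_exponent_le h hpq]

lemma mul_self_le_of_oneSidedLipschitz {f : ℝ → ℝ} {L : ℝ}
    (hf : ∀ x y, (f x - f y) * (x - y) ≤ L * (x - y) ^ 2) (x : ℝ) :
    f x * x ≤ (max L 0 + |f 0|) * (1 + x ^ 2) := by
  have h_test : (f x - f 0) * x ≤ L * x ^ 2 := by simpa using hf x 0
  have hL : L * x ^ 2 ≤ max L 0 * x ^ 2 :=
    mul_le_mul_of_nonneg_right (le_max_left _ _) (sq_nonneg x)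
  have hf0 : f 0 * x ≤ |f 0| * (1 + x ^ 2) :=
    calc f 0 * x ≤ |f 0| * |x| := by rw [← abs_mul]; exact le_abs_self _
      _ ≤ |f 0| * (1 + x ^ 2) := by
        gcongr; nlinarith [sq_nonneg (|x| - 1), sq_abs x]
  nlinarith [le_max_right L 0]

lemma abs_mul_self_le_of_abs_le_rpow {f : ℝ → ℝ} {C₀ q : ℝ} (hq : q ≠ 0)
    (hgrow : ∀ x, |f x| ≤ C₀ * (1 + |x| ^ (q - 1))) (x : ℝ) :
    |f x * x| ≤ C₀ * (|x| + |x| ^ q) := by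
  have hpow : |x| ^ (q - 1) * |x| = |x| ^ q := by
    rw [← Real.rpow_add_one' (abs_nonneg x) (by simpa using hq), sub_add_cancel]
  calc |f x * x| = |f x| * |x| := abs_mul _ _
    _ ≤ C₀ * (1 + |x| ^ (q - 1)) * |x| := mul_le_mul_of_nonneg_right (hgrow x) (abs_nonneg x)
    _ = C₀ * (|x| + |x| ^ q) := by rw [← hpow]; ring

section FiniteMeasure

variable {α : Type*} [MeasurableSpace α] {μ : Measure α} [IsFiniteMeasure μ]
  {u : α → ℝ} {q : ℝ}

lemma MeasureTheory.Integrable.rpow_abs_of_le (hu : Measurable u) (hq : Integrable (fun x => |u x| ^ q) μ)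
    {p : ℝ} (hp : 0 ≤ p) (hpq : p ≤ q) : Integrable (fun x => |u x| ^ p) μ :=
  ((integrable_const 1).add hq).mono' (hu.abs.pow_const p).aestronglyMeasurable
    (ae_of_all _ fun x => by
      rw [Real.norm_of_nonneg (Real.rpow_nonneg (abs_nonneg _) p)]
      exact Real.rpow_le_one_add_rpow (abs_nonneg _) hp hpq)

lemma MeasureTheory.Integrable.sq_of_rpow_abs (hu : Measurable u) (hq : Integrable (fun x => |u x| ^ q) μ)
    (hq2 : 2 ≤ q) : Integrable (fun x => u x ^ 2) μ := by
  simpa [Real.rpow_two, sq_abs] using hq.rpow_abs_of_le hu zero_le_two hq2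

lemma MeasureTheory.Integrable.comp_mul_self_of_abs_le_rpow {f : ℝ → ℝ} {C₀ : ℝ} (hf : Continuous f)
    (hgrow : ∀ x, |f x| ≤ C₀ * (1 + |x| ^ (q - 1))) (hu : Measurable u)
    (hq : Integrable (fun x => |u x| ^ q) μ) (hq1 : 1 ≤ q) :
    Integrable (fun x => f (u x) * u x) μ := by
  have habs : Integrable (fun x => |u x|) μ := by
    simpa using hq.rpow_abs_of_le hu zero_le_one hq1
  exact ((habs.add hq).const_mul C₀).mono' ((hf.measurable.comp hu).mul hu).aestronglyMeasurable
    (ae_of_all _ fun x => abs_mul_self_le_of_abs_le_rpow (by linarith) hgrow (u x))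

lemma integral_comp_mul_self_le_of_oneSidedLipschitz {f : ℝ → ℝ} {L : ℝ}
    (hf : ∀ x y, (f x - f y) * (x - y) ≤ L * (x - y) ^ 2)
    (hfu : Integrable (fun x => f (u x) * u x) μ) (hu2 : Integrable (fun x => u x ^ 2) μ) :
    ∫ x, f (u x) * u x ∂μ ≤
      (max L 0 + |f 0|) * max 1 (μ.real Set.univ) * (1 + ∫ x, u x ^ 2 ∂μ) := by
  set A := max L 0 + |f 0|
  have hA : 0 ≤ A := by positivity
  have hI : 0 ≤ ∫ x, u x ^ 2 ∂μ := integral_nonneg fun x => sq_nonneg (u x)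
  calc ∫ x, f (u x) * u x ∂μ ≤ ∫ x, A * (1 + u x ^ 2) ∂μ :=
        integral_mono hfu (((integrable_const 1).add hu2).const_mul A)
          fun x => mul_self_le_of_oneSidedLipschitz hf (u x)
    _ = A * (μ.real Set.univ + ∫ x, u x ^ 2 ∂μ) := by
        rw [integral_const_mul, integral_add (integrable_const 1) hu2, integral_const,
          smul_eq_mul, mul_one]
    _ ≤ A * max 1 (μ.real Set.univ) * (1 + ∫ x, u x ^ 2 ∂μ) := by
        rw [mul_assoc]
        gcongr
        nlinarith [le_max_left 1 (μ.real Set.univ), le_max_right 1 (μ.real Set.univ)]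

end FiniteMeasure

theorem nemytskii_coercive_general
    (d : ℕ) (O : Set (Fin d → ℝ))
    (hOfin : volume O < ⊤)
    (q : ℝ) (hq : 2 ≤ q) (Lf : ℝ) (C₀ : ℝ)
    (f : ℝ → ℝ) (hf : Continuous f)
    (hmon : ∀ x y : ℝ, (f x - f y) * (x - y) ≤ Lf * (x - y) ^ 2)
    (hgrow : ∀ x : ℝ, |f x| ≤ C₀ * (1 + |x| ^ (q - 1))) :
    ∃ C : ℝ, 0 ≤ C ∧
      ∀ u : (Fin d → ℝ) → ℝ, Measurable u →
        IntegrableOn (fun x => |u x| ^ q) O volume →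
        IntegrableOn (fun x => f (u x) * u x) O volume ∧
          ∫ x in O, f (u x) * u x ≤ C * (1 + ∫ x in O, (u x) ^ 2) := by
  have : IsFiniteMeasure (volume.restrict O) := isFiniteMeasure_restrict.mpr hOfin.ne
  refine ⟨(max Lf 0 + |f 0|) * max 1 ((volume.restrict O).real Set.univ), by positivity,
    fun u hu hint => ?_⟩
  have hfu : IntegrableOn (fun x => f (u x) * u x) O volume :=
    Integrable.comp_mul_self_of_abs_le_rpow hf hgrow hu hint (by linarith)
  exact ⟨hfu, integral_comp_mul_self_le_of_oneSidedLipschitz hmon hfu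
    (Integrable.sq_of_rpow_abs hu hint hq)⟩

/-- The coercivity property (2.11) of the Nemytskii operator: if `f : ℝ → ℝ` is
continuous, one-sided Lipschitz with constant `L_f`, and grows polynomially of order
`q - 1`, then there is a constant `C ≥ 0` (depending only on `f` and on the measure of
`𝒪`) such that for every `u ∈ L^q(𝒪)`, the function `x ↦ f (u x) * u x` is integrable
on `𝒪` and `∫_𝒪 f (u x) u x dx ≤ C (1 + ∫_𝒪 (u x)² dx)`. -/
theorem nemytskii_coercive
    (d : ℕ) (hd : 1 ≤ d) (O : Set (Fin d → ℝ)) (hO : MeasurableSet O)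
    (hOfin : volume O < ⊤)
    (q : ℝ) (hq : 2 ≤ q) (Lf : ℝ) (C₀ : ℝ) (hC₀ : 0 ≤ C₀)
    (f : ℝ → ℝ) (hf : Continuous f)
    (hmon : ∀ x y : ℝ, (f x - f y) * (x - y) ≤ Lf * (x - y) ^ 2)
    (hgrow : ∀ x : ℝ, |f x| ≤ C₀ * (1 + |x| ^ (q - 1))) :
    ∃ C : ℝ, 0 ≤ C ∧
      ∀ u : (Fin d → ℝ) → ℝ, Measurable u →
        IntegrableOn (fun x => |u x| ^ q) O volume →
        IntegrableOn (fun x => f (u x) * u x) O volume ∧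
          ∫ x in O, f (u x) * u x ≤ C * (1 + ∫ x in O, (u x) ^ 2) :=
  nemytskii_coercive_general d O hOfin q hq Lf C₀ f hf hmon hgrow
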